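/- arXiv:1612.00238 — 4 statements merged into one kernel-verified Lean document; each statement's English description precedes it below -/
import Mathlib

section
/- For α ∈ (0,1), m ∈ (-1,1), and r = (1+m)/(1-m), the arcsine Lamperti density f_1(x) = (2 sin(πα)/π) · (1-x)^{α-1}(1+x)^{α-1} / ( r(1-x)^{2α} + 2cos(πα)(1+x)^α(1-x)^α + r^{-1}(1+x)^{2α} ) satisfies ∫_{-1}^{1} f_1(x) dx = 1. -/
/-! With `z(x) = (1 + x)^α + r (1 - x)^α e^{iθ}`, one has `|z(x)|² = r D(x)` for the denominator
`D` of the kernel, and a direct computation of `Im (z'/z)` shows that the kernel is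
`-(d/dx) arg z(x)`. As `x` runs from `-1` to `1`, `z` stays in the upper half plane and its
argument decreases from `θ` to `0`, so the kernel integrates to `θ`. The arcsine Lamperti density
is the kernel at `θ = πα`, divided by `πα`. -/

open Real Set MeasureTheory

/-- The arcsine Lamperti density with index α and mean drift m, where
`r = (1+m)/(1-m)`. -/
noncomputable def arcsineLamperti (α m : ℝ) (x : ℝ) : ℝ :=
  (2 * Real.sin (Real.pi * α) / Real.pi) *
      ((1 - x) ^ (α - 1) * (1 + x) ^ (α - 1)) /
    (((1 + m) / (1 - m)) * (1 - x) ^ (2 * α)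
      + 2 * Real.cos (Real.pi * α) * (1 + x) ^ α * (1 - x) ^ α
      + ((1 + m) / (1 - m))⁻¹ * (1 + x) ^ (2 * α))

theorem HasDerivAt.arg_real {f : ℝ → ℂ} {f' : ℂ} {x : ℝ} (hf : HasDerivAt f f' x)
    (hx : f x ∈ Complex.slitPlane) : HasDerivAt (fun t => Complex.arg (f t)) (f' / f x).im x := by
  simpa only [Function.comp_def, Complex.imCLM_apply, Complex.log_im] using
    Complex.imCLM.hasFDerivAt.comp_hasDerivAt x (hf.clog_real hx)

namespace ArcsineLamperti

variable {α θ r : ℝ}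

noncomputable def kernel (α θ r x : ℝ) : ℝ :=
  2 * α * sin θ * ((1 - x) ^ (α - 1) * (1 + x) ^ (α - 1)) /
    (r * (1 - x) ^ (2 * α) + 2 * cos θ * (1 + x) ^ α * (1 - x) ^ α + r⁻¹ * (1 + x) ^ (2 * α))

noncomputable def curve (α θ r x : ℝ) : ℂ :=
  ((1 + x) ^ α : ℝ) +
    ((r * (1 - x) ^ α : ℝ) : ℂ) * (((cos θ : ℝ) : ℂ) + ((sin θ : ℝ) : ℂ) * Complex.I)

@[simp] lemma curve_re (x : ℝ) : (curve α θ r x).re = (1 + x) ^ α + r * (1 - x) ^ α * cos θ := by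
  simp [curve, Complex.cos_ofReal_re, Complex.sin_ofReal_re]

@[simp] lemma curve_im (x : ℝ) : (curve α θ r x).im = r * (1 - x) ^ α * sin θ := by
  simp [curve, Complex.cos_ofReal_re, Complex.sin_ofReal_re]

lemma normSq_curve {x : ℝ} (hx : x ∈ Ioo (-1) 1) (hr : 0 < r) :
    Complex.normSq (curve α θ r x) =
      r * (r * (1 - x) ^ (2 * α) + 2 * cos θ * (1 + x) ^ α * (1 - x) ^ α
        + r⁻¹ * (1 + x) ^ (2 * α)) := by
  have h2 : ∀ y : ℝ, 0 ≤ y → y ^ (2 * α) = (y ^ α) ^ 2 := fun y hy => by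
    rw [mul_comm, Real.rpow_mul hy, Real.rpow_two]
  rw [Complex.normSq_apply, curve_re, curve_im, h2 _ (by linarith [hx.2]),
    h2 _ (by linarith [hx.1])]
  field_simp
  linear_combination (r ^ 2 * ((1 - x) ^ α) ^ 2) * sin_sq_add_cos_sq θ

lemma curve_mem_slitPlane {x : ℝ} (hx : x ∈ Icc (-1) 1) (hα : 0 < α) (hθ : θ ∈ Ioo 0 π)
    (hr : 0 < r) : curve α θ r x ∈ Complex.slitPlane := by
  rw [Complex.mem_slitPlane_iff, curve_re, curve_im]
  rcases hx.2.lt_or_eq with hx1 | rfl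
  · exact Or.inr (by have := sin_pos_of_mem_Ioo hθ; positivity)
  · simp [Real.zero_rpow hα.ne']
    positivity

lemma continuous_curve (hα : 0 ≤ α) : Continuous (curve α θ r) := by
  unfold curve
  fun_prop (disch := exact hα)

lemma hasDerivAt_curve {x : ℝ} (hx : x ∈ Ioo (-1) 1) :
    HasDerivAt (curve α θ r)
      (((α * (1 + x) ^ (α - 1) : ℝ) : ℂ) + ((-(r * (α * (1 - x) ^ (α - 1))) : ℝ) : ℂ) *
        (((cos θ : ℝ) : ℂ) + ((sin θ : ℝ) : ℂ) * Complex.I)) x := by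
  have hp : HasDerivAt (fun y : ℝ => r * (1 - y) ^ α) (-(r * (α * (1 - x) ^ (α - 1)))) x := by
    simpa using (((hasDerivAt_id' x).const_sub 1).rpow_const (p := α)
      (Or.inl (by linarith [hx.2]))).const_mul r
  have hq : HasDerivAt (fun y : ℝ => (1 + y) ^ α) (α * (1 + x) ^ (α - 1)) x := by
    simpa using ((hasDerivAt_id' x).const_add 1).rpow_const (p := α) (Or.inl (by linarith [hx.1]))
  exact hq.ofReal_comp.add (hp.ofReal_comp.mul_const _)

lemma hasDerivAt_arg_curve {x : ℝ} (hx : x ∈ Ioo (-1) 1) (hα : 0 < α) (hθ : θ ∈ Ioo 0 π)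
    (hr : 0 < r) : HasDerivAt (fun y => Complex.arg (curve α θ r y)) (-kernel α θ r x) x := by
  convert (hasDerivAt_curve hx).arg_real
    (curve_mem_slitPlane (Ioo_subset_Icc_self hx) hα hθ hr) using 1
  have hm : 0 < 1 - x := by linarith [hx.2]
  have hp : 0 < 1 + x := by linarith [hx.1]
  rw [Complex.div_im, normSq_curve hx hr, curve_re, curve_im]
  simp only [Complex.add_re, Complex.add_im, Complex.mul_re, Complex.mul_im, Complex.ofReal_re,
    Complex.ofReal_im, Complex.I_re, Complex.I_im]
  rw [Real.rpow_sub hm, Real.rpow_sub hp, Real.rpow_one, Real.rpow_one, kernel,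
    Real.rpow_sub hm, Real.rpow_sub hp, Real.rpow_one, Real.rpow_one]
  field_simp
  ring

lemma arg_curve_one (hα : 0 < α) : Complex.arg (curve α θ r 1) = 0 := by
  simp [curve, Real.zero_rpow hα.ne', Complex.arg_ofReal_of_nonneg, Real.rpow_nonneg]

lemma arg_curve_neg_one (hα : 0 < α) (hθ : θ ∈ Ioo 0 π) (hr : 0 < r) :
    Complex.arg (curve α θ r (-1)) = θ := by
  have h : curve α θ r (-1) =
      ((r * 2 ^ α : ℝ) : ℂ) * (Complex.cos θ + Complex.sin θ * Complex.I) := by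
    norm_num [curve, Real.zero_rpow hα.ne']
  rw [h, Complex.arg_real_mul _ (by positivity),
    Complex.arg_cos_add_sin_mul_I ⟨by linarith [hθ.1, pi_pos], hθ.2.le⟩]

lemma kernel_nonneg {x : ℝ} (hx : x ∈ Ioo (-1) 1) (hα : 0 < α) (hθ : θ ∈ Ioo 0 π) (hr : 0 < r) :
    0 ≤ kernel α θ r x := by
  have hD : 0 ≤ r * (1 - x) ^ (2 * α) + 2 * cos θ * (1 + x) ^ α * (1 - x) ^ α
      + r⁻¹ * (1 + x) ^ (2 * α) :=
    nonneg_of_mul_nonneg_right ((normSq_curve hx hr).symm ▸ Complex.normSq_nonneg _) hr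
  have hs := (sin_pos_of_mem_Ioo hθ).le
  exact div_nonneg (mul_nonneg (by positivity)
    (mul_nonneg (rpow_nonneg (by linarith [hx.2]) _) (rpow_nonneg (by linarith [hx.1]) _))) hD

theorem integral_kernel (hα : 0 < α) (hθ : θ ∈ Ioo 0 π) (hr : 0 < r) :
    ∫ x in (-1:ℝ)..1, kernel α θ r x = θ := by
  have hcont : ContinuousOn (fun x => -Complex.arg (curve α θ r x)) (Icc (-1) 1) := fun x hx =>
    ((Complex.continuousAt_arg (curve_mem_slitPlane hx hα hθ hr)).comp_continuousWithinAt
      (continuous_curve hα.le).continuousWithinAt).neg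
  have hderiv : ∀ x ∈ Ioo (-1:ℝ) 1,
      HasDerivAt (fun x => -Complex.arg (curve α θ r x)) (kernel α θ r x) x :=
    fun x hx => by simpa using (hasDerivAt_arg_curve hx hα hθ hr).fun_neg
  have hint : IntervalIntegrable (kernel α θ r) volume (-1) 1 :=
    (intervalIntegrable_iff_integrableOn_Ioc_of_le (by norm_num)).2 <|
      intervalIntegral.integrableOn_deriv_of_nonneg hcont hderiv
        fun x hx => kernel_nonneg hx hα hθ hr
  rw [intervalIntegral.integral_eq_sub_of_hasDerivAt_of_le (by norm_num) hcont hderiv hint]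
  simp [arg_curve_one hα, arg_curve_neg_one hα hθ hr]

end ArcsineLamperti

/-- The arcsine Lamperti density integrates to 1 over (-1,1). -/
theorem stmt5 (α m : ℝ) (hα : α ∈ Set.Ioo (0:ℝ) 1) (hm : m ∈ Set.Ioo (-1:ℝ) 1) :
    ∫ x in (-1:ℝ)..1, arcsineLamperti α m x = 1 := by
  have hπα : π * α ∈ Ioo 0 π := ⟨by nlinarith [pi_pos, hα.1], by nlinarith [pi_pos, hα.2]⟩
  have hr : 0 < (1 + m) / (1 - m) := div_pos (by linarith [hm.1]) (by linarith [hm.2])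
  have hf : arcsineLamperti α m =
      fun x => (π * α)⁻¹ * ArcsineLamperti.kernel α (π * α) ((1 + m) / (1 - m)) x := by
    funext x
    have := hα.1.ne'
    simp only [arcsineLamperti, ArcsineLamperti.kernel]
    field_simp
  rw [hf, intervalIntegral.integral_const_mul, ArcsineLamperti.integral_kernel hα.1 hπα hr,
    inv_mul_cancel₀ hπα.1.ne']
end

section
/- Let u_n = P(τ^u = n), d_n = P(τ^d = n) be the distributions of two independent positive-integer-valued random variables, let T_u(z), T_d(z) be the generating functions of their tails and F_u(z), F_d(z) their probability generating functions. Define p_{n,k} by the recursion p_{n,k} = ∑_{m+l ≤ n, m ≤ k} d_l u_m p_{n-(m+l), k-m} + ∑_{l ≤ n} d_l 𝒯_u(n-l) δ_{k, n-l+1} + 𝒯_d(n) δ_{k,0}. Then the double generating function P(x,y) = ∑_{n,k≥0} p_{n,k} x^n y^k satisfies P(x,y) = (F_d(x) T_u(xy) y + T_d(x)) / (1 - F_d(x) F_u(xy)) for |x|, |y| < 1. -/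
/-- Tail sequence `𝒯(n) = P(τ > n) = ∑_{m > n} u m` of a distribution `u` on ℕ. -/
noncomputable def tailSeq (u : ℕ → ℝ) (n : ℕ) : ℝ := ∑' m : ℕ, if n < m then u m else 0

/-!
Decomposing according to the first descent and the first rise, `p` satisfies a renewal
equation, which on generating functions reads
`P(x,y) = F_d(x) F_u(xy) P(x,y) + F_d(x) T_u(xy) y + T_d(x)`: a complete descent of length `l`
contributes `x^l`, a complete rise of length `m` contributes `(xy)^m`, and the walk then starts
afresh. The rows of `p` are probability distributions supported on `0, …, n + 1`, so all these
series converge absolutely for `|x|, |y| < 1`, and `|F_d(x) F_u(xy)| ≤ |x| < 1`.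
-/

open Finset Function

section Tail

variable {u : ℕ → ℝ}

theorem tailSeq_eq_tsum_nat_add (n : ℕ) : tailSeq u n = ∑' i, u (i + (n + 1)) := by
  rw [tailSeq, ← (add_left_injective (n + 1)).tsum_eq]
  · simp only [show ∀ i, n < i + (n + 1) by omega, if_true]
  · intro m hm
    by_cases h : n < m
    · exact ⟨m - (n + 1), by simp only; omega⟩
    · simp [h] at hm

theorem sum_range_add_tailSeq {s : ℝ} (hu : HasSum u s) (n : ℕ) :
    ∑ m ∈ range (n + 1), u m + tailSeq u n = s := by
  rw [tailSeq_eq_tsum_nat_add, hu.summable.sum_add_tsum_nat_add, hu.tsum_eq]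

theorem tailSeq_nonneg (hu : ∀ n, 0 ≤ u n) (n : ℕ) : 0 ≤ tailSeq u n :=
  tsum_nonneg fun m => by split_ifs <;> simp [hu m]

theorem abs_tailSeq_le (hu : ∀ n, 0 ≤ u n) {s : ℝ} (hs : HasSum u s) (n : ℕ) :
    |tailSeq u n| ≤ s := by
  rw [abs_of_nonneg (tailSeq_nonneg hu n)]
  linarith [sum_range_add_tailSeq hs n, sum_nonneg fun m (_ : m ∈ range (n + 1)) => hu m]

end Tail

section SeriesBounds

theorem summable_norm_mul_pow {c : ℕ → ℝ} {C t : ℝ} (hc : ∀ n, |c n| ≤ C) (ht : |t| < 1) :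
    Summable fun n => ‖c n * t ^ n‖ := by
  refine .of_nonneg_of_le (fun n => norm_nonneg _) (fun n => ?_)
    ((summable_geometric_of_lt_one (abs_nonneg t) ht).mul_left C)
  rw [Real.norm_eq_abs, abs_mul, abs_pow]
  exact mul_le_mul_of_nonneg_right (hc n) (by positivity)

theorem summable_norm_mul_pow_mul_pow {q : ℕ → ℕ → ℝ} {C x y : ℝ} (hq : ∀ n k, |q n k| ≤ C)
    (hx : |x| < 1) (hy : |y| < 1) :
    Summable fun z : ℕ × ℕ => ‖q z.1 z.2 * x ^ z.1 * y ^ z.2‖ := by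
  have hgeom : Summable fun z : ℕ × ℕ => |x| ^ z.1 * |y| ^ z.2 :=
    (summable_geometric_of_lt_one (abs_nonneg x) hx).mul_of_nonneg
      (summable_geometric_of_lt_one (abs_nonneg y) hy) (fun _ => by positivity)
      (fun _ => by positivity)
  refine .of_nonneg_of_le (fun z => norm_nonneg _) (fun z => ?_) (hgeom.mul_left C)
  rw [Real.norm_eq_abs, abs_mul, abs_mul, abs_pow, abs_pow, mul_assoc]
  exact mul_le_mul_of_nonneg_right (hq _ _) (by positivity)

variable {c : ℕ → ℝ} {s t : ℝ}

theorem abs_le_of_hasSum (hc : ∀ n, 0 ≤ c n) (hs : HasSum c s) (n : ℕ) : |c n| ≤ s :=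
  (abs_of_nonneg (hc n)).trans_le (le_hasSum hs n fun j _ => hc j)

theorem abs_tsum_mul_pow_le (hc : ∀ n, 0 ≤ c n) (hs : HasSum c s) (ht : |t| ≤ 1) :
    |∑' n, c n * t ^ n| ≤ s := by
  rw [← Real.norm_eq_abs]
  refine tsum_of_norm_bounded hs fun n => ?_
  rw [Real.norm_eq_abs, abs_mul, abs_pow, abs_of_nonneg (hc n)]
  exact mul_le_of_le_one_right (hc n) (pow_le_one₀ (abs_nonneg t) ht)

theorem abs_tsum_mul_pow_le_mul_abs (hc : ∀ n, 0 ≤ c n) (hc0 : c 0 = 0) (hs : HasSum c s)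
    (ht : |t| ≤ 1) : |∑' n, c n * t ^ n| ≤ s * |t| := by
  rw [← Real.norm_eq_abs]
  refine tsum_of_norm_bounded (hs.mul_right |t|) fun n => ?_
  rw [Real.norm_eq_abs, abs_mul, abs_pow, abs_of_nonneg (hc n)]
  rcases n.eq_zero_or_pos with rfl | hn
  · simp [hc0]
  · exact mul_le_mul_of_nonneg_left (pow_le_of_le_one (abs_nonneg t) ht hn.ne') (hc n)

end SeriesBounds

/- The three cases for the first steps of the walk after an up-to-down turn: a complete descent
of length `l` followed by a complete rise of length `m`, after which the walk starts afresh; a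
complete descent followed by a rise still in progress at time `n`; a descent still in progress
at time `n`. -/
def renewalPart (u d : ℕ → ℝ) (p : ℕ → ℕ → ℝ) (n k : ℕ) : ℝ :=
  ∑ m ∈ range (k + 1), ∑ l ∈ range (n + 1),
    if m + l ≤ n then d l * u m * p (n - (m + l)) (k - m) else 0

noncomputable def risePart (u d : ℕ → ℝ) (n k : ℕ) : ℝ :=
  ∑ l ∈ range (n + 1), d l * tailSeq u (n - l) * (if k = n - l + 1 then 1 else 0)

noncomputable def descentPart (d : ℕ → ℝ) (n k : ℕ) : ℝ :=
  tailSeq d n * (if k = 0 then 1 else 0)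

section Occupation

variable {u d : ℕ → ℝ} {p : ℕ → ℕ → ℝ}

theorem renewalPart_nonneg (hd0 : d 0 = 0) (hu : ∀ n, 0 ≤ u n) (hd : ∀ n, 0 ≤ d n) {n : ℕ}
    (hp : ∀ n' < n, ∀ k, 0 ≤ p n' k) (k : ℕ) : 0 ≤ renewalPart u d p n k := by
  refine sum_nonneg fun m _ => sum_nonneg fun l _ => ?_
  split_ifs with hml
  · rcases l.eq_zero_or_pos with rfl | hl
    · simp [hd0]
    · exact mul_nonneg (mul_nonneg (hd l) (hu m)) (hp _ (by omega) _)
  · exact le_rfl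

theorem risePart_nonneg (hu : ∀ n, 0 ≤ u n) (hd : ∀ n, 0 ≤ d n) (n k : ℕ) :
    0 ≤ risePart u d n k :=
  sum_nonneg fun l _ => mul_nonneg (mul_nonneg (hd l) (tailSeq_nonneg hu _)) (by split_ifs <;> simp)

theorem descentPart_nonneg (hd : ∀ n, 0 ≤ d n) (n k : ℕ) : 0 ≤ descentPart d n k :=
  mul_nonneg (tailSeq_nonneg hd n) (by split_ifs <;> simp)

theorem occupation_nonneg (hd0 : d 0 = 0) (hu : ∀ n, 0 ≤ u n) (hd : ∀ n, 0 ≤ d n)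
    (hrec : ∀ n k, p n k = renewalPart u d p n k + risePart u d n k + descentPart d n k)
    (n k : ℕ) : 0 ≤ p n k := by
  induction n using Nat.strong_induction_on generalizing k with
  | _ n ih =>
    rw [hrec]
    exact add_nonneg (add_nonneg (renewalPart_nonneg hd0 hu hd ih k) (risePart_nonneg hu hd n k))
      (descentPart_nonneg hd n k)

theorem occupation_eq_zero_of_lt (hd0 : d 0 = 0)
    (hrec : ∀ n k, p n k = renewalPart u d p n k + risePart u d n k + descentPart d n k)
    {n k : ℕ} (hk : n + 1 < k) : p n k = 0 := by
  induction n using Nat.strong_induction_on generalizing k with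
  | _ n ih =>
    have hA : renewalPart u d p n k = 0 := by
      refine sum_eq_zero fun m hm => sum_eq_zero fun l hl => ?_
      split_ifs with hml
      · rcases l.eq_zero_or_pos with rfl | hl
        · simp [hd0]
        · rw [ih _ (by omega) (by omega), mul_zero]
      · rfl
    have hB : risePart u d n k = 0 :=
      sum_eq_zero fun l hl => by rw [if_neg (by simp at hl; omega), mul_zero]
    have hC : descentPart d n k = 0 := by rw [descentPart, if_neg (by omega), mul_zero]
    rw [hrec, hA, hB, hC, add_zero, add_zero]

theorem sum_range_renewalPart (hd0 : d 0 = 0) {n : ℕ}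
    (hrow : ∀ n' < n, ∀ N, n' + 2 ≤ N → ∑ k ∈ range N, p n' k = 1) :
    ∑ k ∈ range (n + 2), renewalPart u d p n k
      = ∑ l ∈ range (n + 1), d l * ∑ m ∈ range (n - l + 1), u m := by
  have hinner : ∀ m l, (∑ j ∈ range (n + 2 - m),
      if m + l ≤ n then d l * u m * p (n - (m + l)) j else 0)
        = if m + l ≤ n then d l * u m else 0 := by
    intro m l
    split_ifs with hml
    · rw [← mul_sum]
      rcases l.eq_zero_or_pos with rfl | hl
      · simp [hd0]
      · rw [hrow _ (by omega) _ (by omega), mul_one]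
    · simp
  refine (sum_range_diag_flip (n + 2) fun m j => ∑ l ∈ range (n + 1),
    if m + l ≤ n then d l * u m * p (n - (m + l)) j else 0).trans ?_
  simp only [sum_congr rfl fun m _ => sum_comm (s := range (n + 2 - m)), hinner]
  rw [sum_comm]
  refine sum_congr rfl fun l hl => ?_
  rw [mul_sum, ← sum_filter]
  refine sum_congr (ext fun m => ?_) fun m _ => rfl
  simp only [mem_filter, mem_range] at hl ⊢
  omega

theorem sum_range_risePart (n : ℕ) :
    ∑ k ∈ range (n + 2), risePart u d n k = ∑ l ∈ range (n + 1), d l * tailSeq u (n - l) := by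
  simp only [risePart]
  rw [sum_comm]
  refine sum_congr rfl fun l hl => ?_
  simp only [mul_ite, mul_one, mul_zero, sum_ite_eq']
  rw [if_pos (by simp only [mem_range] at hl ⊢; omega)]

theorem sum_range_descentPart (n : ℕ) :
    ∑ k ∈ range (n + 2), descentPart d n k = tailSeq d n := by
  simp [descentPart]

theorem sum_range_occupation (hd0 : d 0 = 0) (hus : HasSum u 1) (hds : HasSum d 1)
    (hrec : ∀ n k, p n k = renewalPart u d p n k + risePart u d n k + descentPart d n k)
    (n : ℕ) : ∑ k ∈ range (n + 2), p n k = 1 := by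
  induction n using Nat.strong_induction_on with
  | _ n ih =>
    have hrow : ∀ n' < n, ∀ N, n' + 2 ≤ N → ∑ k ∈ range N, p n' k = 1 := by
      intro n' hn' N hN
      rw [← ih n' hn', eq_comm]
      refine sum_subset (range_subset_range.2 hN) fun k _ hk => ?_
      exact occupation_eq_zero_of_lt hd0 hrec (by simp at hk; omega)
    simp only [hrec n, sum_add_distrib]
    rw [sum_range_renewalPart hd0 hrow, sum_range_risePart, sum_range_descentPart,
      ← sum_add_distrib]
    simp only [← mul_add, sum_range_add_tailSeq hus, mul_one]
    exact sum_range_add_tailSeq hds n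

theorem abs_occupation_le_one (hd0 : d 0 = 0) (hu : ∀ n, 0 ≤ u n) (hd : ∀ n, 0 ≤ d n)
    (hus : HasSum u 1) (hds : HasSum d 1)
    (hrec : ∀ n k, p n k = renewalPart u d p n k + risePart u d n k + descentPart d n k)
    (n k : ℕ) : |p n k| ≤ 1 := by
  rw [abs_of_nonneg (occupation_nonneg hd0 hu hd hrec n k)]
  by_cases hk : k < n + 2
  · rw [← sum_range_occupation hd0 hus hds hrec n]
    exact single_le_sum (fun j _ => occupation_nonneg hd0 hu hd hrec n j) (mem_range.2 hk)
  · rw [occupation_eq_zero_of_lt hd0 hrec (by omega)]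
    exact zero_le_one

end Occupation

section GeneratingFunction

theorem hasSum_sum_fiber_of_injective {α β γ κ : Type*} [AddCommMonoid α] [TopologicalSpace α]
    [ContinuousAdd α] [RegularSpace α] {f : β × γ → α} {e : κ → β × γ} {S : β → Finset γ}
    {a : α} (he : Injective e) (hrange : ∀ z ∉ Set.range e, f z = 0)
    (hS : ∀ b, ∀ c ∉ S b, f (b, c) = 0) (h : HasSum (f ∘ e) a) :
    HasSum (fun b => ∑ c ∈ S b, f (b, c)) a :=
  ((he.hasSum_iff hrange).1 h).prod_fiberwise fun b => hasSum_sum_of_ne_finset_zero (hS b)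

theorem hasSum_mul_of_summable_norm {ι κ : Type*} {f : ι → ℝ} {g : κ → ℝ}
    (hf : Summable fun i => ‖f i‖) (hg : Summable fun j => ‖g j‖) :
    HasSum (fun w : ι × κ => f w.1 * g w.2) ((∑' i, f i) * ∑' j, g j) := by
  rw [tsum_mul_tsum_of_summable_norm hf hg]
  exact (summable_mul_of_summable_norm hf hg).hasSum

variable {u d : ℕ → ℝ} {p : ℕ → ℕ → ℝ} {x y a : ℝ}

theorem hasSum_renewalPart
    (h : HasSum (fun w : ℕ × ℕ × ℕ × ℕ => d w.1 * x ^ w.1 *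
      (u w.2.1 * (x * y) ^ w.2.1 * (p w.2.2.1 w.2.2.2 * x ^ w.2.2.1 * y ^ w.2.2.2))) a) :
    HasSum (fun z : ℕ × ℕ => renewalPart u d p z.1 z.2 * x ^ z.1 * y ^ z.2) a := by
  let f : (ℕ × ℕ) × ℕ × ℕ → ℝ := fun ⟨⟨n, k⟩, m, l⟩ =>
    if m ≤ k ∧ m + l ≤ n then d l * u m * p (n - (m + l)) (k - m) * x ^ n * y ^ k else 0
  let e : ℕ × ℕ × ℕ × ℕ → (ℕ × ℕ) × ℕ × ℕ := fun ⟨l, m, i, j⟩ => ((l + m + i, m + j), (m, l))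
  have he : Injective e := by
    rintro ⟨l, m, i, j⟩ ⟨l', m', i', j'⟩ h
    simp only [e, Prod.mk.injEq] at h ⊢
    omega
  have hrange : ∀ z ∉ Set.range e, f z = 0 := by
    rintro ⟨⟨n, k⟩, m, l⟩ hz
    refine if_neg fun ⟨hmk, hml⟩ => hz ⟨(l, m, n - (m + l), k - m), ?_⟩
    simp only [e, Prod.mk.injEq, and_true]
    omega
  have hS : ∀ z : ℕ × ℕ, ∀ c ∉ range (z.2 + 1) ×ˢ range (z.1 + 1), f (z, c) = 0 := by
    rintro ⟨n, k⟩ ⟨m, l⟩ hc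
    simp only [mem_product, mem_range] at hc
    exact if_neg (by omega)
  convert hasSum_sum_fiber_of_injective he hrange hS ?_ using 1
  · funext ⟨n, k⟩
    simp only [renewalPart, sum_product, sum_mul]
    refine sum_congr rfl fun m hm => sum_congr rfl fun l hl => ?_
    simp only [mem_range] at hm hl
    by_cases hml : m + l ≤ n
    · simp [f, hml, show m ≤ k by omega]
    · simp [f, hml]
  · convert h using 1
    funext ⟨l, m, i, j⟩
    simp only [f, e, Function.comp_apply]
    rw [if_pos (by omega), show l + m + i - (m + l) = i by omega, Nat.add_sub_cancel_left]
    ring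

theorem hasSum_risePart
    (h : HasSum (fun w : ℕ × ℕ => d w.1 * x ^ w.1 * (tailSeq u w.2 * (x * y) ^ w.2 * y)) a) :
    HasSum (fun z : ℕ × ℕ => risePart u d z.1 z.2 * x ^ z.1 * y ^ z.2) a := by
  let f : (ℕ × ℕ) × ℕ → ℝ := fun ⟨⟨n, k⟩, l⟩ =>
    if l ≤ n ∧ k = n - l + 1 then d l * tailSeq u (n - l) * x ^ n * y ^ k else 0
  let e : ℕ × ℕ → (ℕ × ℕ) × ℕ := fun ⟨l, j⟩ => ((l + j, j + 1), l)
  have he : Injective e := by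
    rintro ⟨l, j⟩ ⟨l', j'⟩ h
    simp only [e, Prod.mk.injEq] at h ⊢
    omega
  have hrange : ∀ z ∉ Set.range e, f z = 0 := by
    rintro ⟨⟨n, k⟩, l⟩ hz
    refine if_neg fun ⟨hln, hk⟩ => hz ⟨(l, n - l), ?_⟩
    simp only [e, Prod.mk.injEq, and_true]
    omega
  have hS : ∀ z : ℕ × ℕ, ∀ l ∉ range (z.1 + 1), f (z, l) = 0 := by
    rintro ⟨n, k⟩ l hl
    simp only [mem_range] at hl
    exact if_neg (by omega)
  convert hasSum_sum_fiber_of_injective he hrange hS ?_ using 1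
  · funext ⟨n, k⟩
    simp only [risePart, sum_mul]
    refine sum_congr rfl fun l hl => ?_
    simp only [mem_range] at hl
    by_cases hk : k = n - l + 1
    · simp [f, hk, show l ≤ n by omega]
    · simp [f, hk]
  · convert h using 1
    funext ⟨l, j⟩
    simp only [f, e, Function.comp_apply]
    rw [if_pos (by omega), Nat.add_sub_cancel_left]
    ring

theorem hasSum_descentPart (h : HasSum (fun n => tailSeq d n * x ^ n) a) :
    HasSum (fun z : ℕ × ℕ => descentPart d z.1 z.2 * x ^ z.1 * y ^ z.2) a := by
  have he : Injective fun n : ℕ => (n, 0) := fun _ _ h => (Prod.mk.inj h).1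
  refine (he.hasSum_iff fun z hz => ?_).1 (by simpa [Function.comp_def, descentPart] using h)
  have hz2 : z.2 ≠ 0 := fun h0 => hz ⟨z.1, Prod.ext rfl h0.symm⟩
  simp [descentPart, hz2]

theorem tsum_occupation_eq_renewal
    (hrec : ∀ n k, p n k = renewalPart u d p n k + risePart u d n k + descentPart d n k)
    (hd : Summable fun n => ‖d n * x ^ n‖) (hu : Summable fun n => ‖u n * (x * y) ^ n‖)
    (hTu : Summable fun n => ‖tailSeq u n * (x * y) ^ n‖)
    (hTd : Summable fun n => tailSeq d n * x ^ n)
    (hp : Summable fun z : ℕ × ℕ => ‖p z.1 z.2 * x ^ z.1 * y ^ z.2‖) :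
    ∑' z : ℕ × ℕ, p z.1 z.2 * x ^ z.1 * y ^ z.2
      = (∑' n, d n * x ^ n) *
          ((∑' n, u n * (x * y) ^ n) * ∑' z : ℕ × ℕ, p z.1 z.2 * x ^ z.1 * y ^ z.2)
        + (∑' n, d n * x ^ n) * ((∑' n, tailSeq u n * (x * y) ^ n) * y)
        + ∑' n, tailSeq d n * x ^ n := by
  have hup := hu.mul_norm hp
  have hA := hasSum_mul_of_summable_norm hd hup
  rw [← tsum_mul_tsum_of_summable_norm hu hp] at hA
  have hB := hasSum_mul_of_summable_norm (f := fun n => d n * x ^ n)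
    (g := fun n => tailSeq u n * (x * y) ^ n * y) hd
    (by simpa only [norm_mul] using hTu.mul_right ‖y‖)
  rw [tsum_mul_right] at hB
  refine HasSum.tsum_eq ?_
  convert ((hasSum_renewalPart hA).add (hasSum_risePart hB)).add
    (hasSum_descentPart (y := y) hTd.hasSum) using 1
  funext z
  rw [hrec]
  ring

end GeneratingFunction

theorem stmt14_general (u d : ℕ → ℝ)
    (hd0 : d 0 = 0)
    (hupos : ∀ n, 0 ≤ u n) (hdpos : ∀ n, 0 ≤ d n)
    (husum : HasSum u 1) (hdsum : HasSum d 1)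
    (p : ℕ → ℕ → ℝ)
    (hrec : ∀ n k : ℕ, p n k
      = (∑ m ∈ Finset.range (k + 1), ∑ l ∈ Finset.range (n + 1),
          if m + l ≤ n then d l * u m * p (n - (m + l)) (k - m) else 0)
        + (∑ l ∈ Finset.range (n + 1),
            d l * tailSeq u (n - l) * (if k = n - l + 1 then 1 else 0))
        + tailSeq d n * (if k = 0 then 1 else 0)) :
    ∀ x y : ℝ, |x| < 1 → |y| < 1 →
      (∑' (n : ℕ) (k : ℕ), p n k * x ^ n * y ^ k)
        = ((∑' n : ℕ, d n * x ^ n) * (∑' n : ℕ, tailSeq u n * (x * y) ^ n) * y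
            + (∑' n : ℕ, tailSeq d n * x ^ n))
          / (1 - (∑' n : ℕ, d n * x ^ n) * (∑' n : ℕ, u n * (x * y) ^ n)) := by
  intro x y hx hy
  have hrec' : ∀ n k, p n k = renewalPart u d p n k + risePart u d n k + descentPart d n k :=
    hrec
  have hxy : |x * y| < 1 := by
    rw [abs_mul]
    exact mul_lt_one_of_nonneg_of_lt_one_left (abs_nonneg x) hx hy.le
  have hp := summable_norm_mul_pow_mul_pow
    (abs_occupation_le_one hd0 hupos hdpos husum hdsum hrec') hx hy
  have key := tsum_occupation_eq_renewal hrec'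
    (summable_norm_mul_pow (abs_le_of_hasSum hdpos hdsum) hx)
    (summable_norm_mul_pow (abs_le_of_hasSum hupos husum) hxy)
    (summable_norm_mul_pow (abs_tailSeq_le hupos husum) hxy)
    (summable_norm_mul_pow (abs_tailSeq_le hdpos hdsum) hx).of_norm hp
  have hden : |(∑' n, d n * x ^ n) * ∑' n, u n * (x * y) ^ n| < 1 := by
    rw [abs_mul]
    refine mul_lt_one_of_nonneg_of_lt_one_left (abs_nonneg _) ?_
      (abs_tsum_mul_pow_le hupos husum hxy.le)
    exact (abs_tsum_mul_pow_le_mul_abs hdpos hd0 hdsum hx.le).trans_lt (by rwa [one_mul])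
  rw [← hp.of_norm.tsum_prod, eq_div_iff (sub_ne_zero.2 fun h => by simp [← h] at hden)]
  linear_combination key

/-- Generating function identity for the double generating function of the occupation-time
law `p_{n,k}` of a persistent random walk built from independent run lengths with
distributions `u` (rises) and `d` (descents):
`P(x,y) = (F_d(x) T_u(xy) y + T_d(x)) / (1 - F_d(x) F_u(xy))`. -/
theorem stmt14 (u d : ℕ → ℝ)
    (hu0 : u 0 = 0) (hd0 : d 0 = 0)
    (hupos : ∀ n, 0 ≤ u n) (hdpos : ∀ n, 0 ≤ d n)
    (husum : HasSum u 1) (hdsum : HasSum d 1)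
    (p : ℕ → ℕ → ℝ)
    (hrec : ∀ n k : ℕ, p n k
      = (∑ m ∈ Finset.range (k + 1), ∑ l ∈ Finset.range (n + 1),
          if m + l ≤ n then d l * u m * p (n - (m + l)) (k - m) else 0)
        + (∑ l ∈ Finset.range (n + 1),
            d l * tailSeq u (n - l) * (if k = n - l + 1 then 1 else 0))
        + tailSeq d n * (if k = 0 then 1 else 0)) :
    ∀ x y : ℝ, |x| < 1 → |y| < 1 →
      (∑' (n : ℕ) (k : ℕ), p n k * x ^ n * y ^ k)
        = ((∑' n : ℕ, d n * x ^ n) * (∑' n : ℕ, tailSeq u n * (x * y) ^ n) * y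
            + (∑' n : ℕ, tailSeq d n * x ^ n))
          / (1 - (∑' n : ℕ, d n * x ^ n) * (∑' n : ℕ, u n * (x * y) ^ n)) :=
  stmt14_general u d hd0 hupos hdpos husum hdsum p hrec
end

section
/- Suppose F_u and F_d are probability generating functions of positive integer random variables with 1 - F_u(z) ~ ((1+b)/2) L(1/(1-z)) (1-z)^α and 1 - F_d(z) ~ ((1-b)/2) L(1/(1-z)) (1-z)^α as z ↑ 1, where L is slowly varying, α ∈ (0,1), b ∈ (-1,1). Let P(x,y) = (F_d(x) T_u(xy) y + T_d(x))/(1 - F_d(x) F_u(xy)) with T_ℓ(z) = (1 - F_ℓ(z))/(1-z). Then for every λ > 0, lim_{x ↑ 1} (1-x) P(x, e^{-λ(1-x)}) = ((1+λ)^{α-1} + ρ)/((1+λ)^α + ρ), where ρ = (1-b)/(1+b). -/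
open Filter Set
open scoped Topology

/-- Probability generating function `F(z) = ∑ u_n zⁿ`. -/
noncomputable def pgf (u : ℕ → ℝ) (z : ℝ) : ℝ := ∑' n : ℕ, u n * z ^ n

/-- Tail generating function `T(z) = (1 - F(z))/(1 - z)`. -/
noncomputable def tgf (u : ℕ → ℝ) (z : ℝ) : ℝ := (1 - pgf u z) / (1 - z)

/-- Double generating function `P(x,y) = (F_d(x) T_u(xy) y + T_d(x))/(1 - F_d(x) F_u(xy))`. -/
noncomputable def Pxy (u d : ℕ → ℝ) (x y : ℝ) : ℝ :=
  (pgf d x * tgf u (x * y) * y + tgf d x) / (1 - pgf d x * pgf u (x * y))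

/-- `L` is slowly varying (at infinity). -/
def SlowlyVarying (L : ℝ → ℝ) : Prop :=
  ∀ c > (0:ℝ), Tendsto (fun t => L (c * t) / L t) atTop (nhds 1)

section Aux

lemma aux_summable {u : ℕ → ℝ} (hupos : ∀ n, 0 ≤ u n) (husum : HasSum u 1)
    {x : ℝ} (hx0 : 0 ≤ x) (hx1 : x ≤ 1) : Summable (fun n => u n * x ^ n) :=
  Summable.of_nonneg_of_le (fun n => mul_nonneg (hupos n) (pow_nonneg hx0 n))
    (fun n => mul_le_of_le_one_right (hupos n) (pow_le_one₀ hx0 hx1)) husum.summable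

lemma aux_pgf_nonneg {u : ℕ → ℝ} (hupos : ∀ n, 0 ≤ u n) {x : ℝ} (hx0 : 0 ≤ x) :
    0 ≤ pgf u x :=
  tsum_nonneg (fun n => mul_nonneg (hupos n) (pow_nonneg hx0 n))

lemma aux_pgf_le {u : ℕ → ℝ} (hu0 : u 0 = 0) (hupos : ∀ n, 0 ≤ u n) (husum : HasSum u 1)
    {x : ℝ} (hx0 : 0 ≤ x) (hx1 : x ≤ 1) : pgf u x ≤ x := by
  have h1 : ∀ n, u n * x ^ n ≤ u n * x := by
    intro n
    cases n with
    | zero => simp [hu0]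
    | succ m =>
      exact mul_le_mul_of_nonneg_left
        (by simpa using pow_le_pow_of_le_one hx0 hx1 (Nat.one_le_iff_ne_zero.2
          (Nat.succ_ne_zero m))) (hupos _)
  calc pgf u x ≤ ∑' n, u n * x := Summable.tsum_le_tsum h1 (aux_summable hupos husum hx0 hx1)
        (husum.summable.mul_right x)
    _ = x := by rw [tsum_mul_right, husum.tsum_eq, one_mul]

lemma aux_pgf_le_one {u : ℕ → ℝ} (hupos : ∀ n, 0 ≤ u n) (husum : HasSum u 1)
    {x : ℝ} (hx0 : 0 ≤ x) (hx1 : x ≤ 1) : pgf u x ≤ 1 := by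
  calc pgf u x ≤ ∑' n, u n := Summable.tsum_le_tsum
          (fun n => mul_le_of_le_one_right (hupos n) (pow_le_one₀ hx0 hx1))
          (aux_summable hupos husum hx0 hx1) husum.summable
    _ = 1 := husum.tsum_eq

lemma aux_pgf_mono {u : ℕ → ℝ} (hupos : ∀ n, 0 ≤ u n) (husum : HasSum u 1)
    {x y : ℝ} (hx0 : 0 ≤ x) (hxy : x ≤ y) (hy1 : y ≤ 1) : pgf u x ≤ pgf u y :=
  Summable.tsum_le_tsum (fun n => mul_le_mul_of_nonneg_left (pow_le_pow_left₀ hx0 hxy n) (hupos n))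
    (aux_summable hupos husum hx0 (hxy.trans hy1))
    (aux_summable hupos husum (hx0.trans hxy) hy1)

lemma aux_pgf_tendsto_one {u : ℕ → ℝ} (hupos : ∀ n, 0 ≤ u n) (husum : HasSum u 1) :
    Tendsto (pgf u) (𝓝[<] (1:ℝ)) (𝓝 1) := by
  rw [Metric.tendsto_nhds]
  intro ε hε
  obtain ⟨N, hN⟩ : ∃ N, 1 - ε/2 < ∑ n ∈ Finset.range N, u n := by
    have := husum.tendsto_sum_nat.eventually (eventually_gt_nhds (by linarith : 1 - ε/2 < 1))
    exact this.exists
  have hcont : Tendsto (fun x : ℝ => ∑ n ∈ Finset.range N, u n * x ^ n) (𝓝 1)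
      (𝓝 (∑ n ∈ Finset.range N, u n)) := by
    have : Continuous (fun x : ℝ => ∑ n ∈ Finset.range N, u n * x ^ n) := by
      continuity
    have h := this.tendsto 1
    simpa using h
  have hev : ∀ᶠ x in 𝓝[<] (1:ℝ), 1 - ε/2 < ∑ n ∈ Finset.range N, u n * x ^ n :=
    eventually_nhdsWithin_of_eventually_nhds (hcont.eventually (eventually_gt_nhds hN))
  filter_upwards [hev, Ioo_mem_nhdsLT_of_mem (by norm_num : (1:ℝ) ∈ Ioc (0:ℝ) 1)] with x h1 h2
  have hle : pgf u x ≤ 1 := aux_pgf_le_one hupos husum h2.1.le h2.2.le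
  have hge : ∑ n ∈ Finset.range N, u n * x ^ n ≤ pgf u x :=
    Summable.sum_le_tsum _ (fun n _ => mul_nonneg (hupos n) (pow_nonneg h2.1.le n))
      (aux_summable hupos husum h2.1.le h2.2.le)
  rw [Real.dist_eq, abs_sub_lt_iff]
  constructor <;> linarith

lemma aux_ne {F g : ℝ → ℝ} {K : ℝ} (hK : 0 < K)
    (h1 : Tendsto (fun z => F z / g z) (𝓝[<] (1:ℝ)) (𝓝 K)) :
    ∀ᶠ x in 𝓝[<] (1:ℝ), g x ≠ 0 ∧ F x ≠ 0 := by
  filter_upwards [h1.eventually (eventually_gt_nhds (half_lt_self hK))] with x hx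
  constructor
  · intro h; rw [h, div_zero] at hx; linarith
  · intro h; rw [h, zero_div] at hx; linarith

lemma aux_map_lt (c : ℝ) (hc : 0 < c) :
    Tendsto (fun x : ℝ => 1 - c * (1 - x)) (𝓝[<] (1:ℝ)) (𝓝[<] (1:ℝ)) := by
  rw [tendsto_nhdsWithin_iff]
  constructor
  · have : Continuous (fun x : ℝ => 1 - c * (1 - x)) := by continuity
    have h := this.tendsto 1
    simp only [sub_self, mul_zero, sub_zero] at h
    exact h.mono_left nhdsWithin_le_nhds
  · filter_upwards [self_mem_nhdsWithin] with x (hx : x < 1)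
    have : 0 < c * (1 - x) := mul_pos hc (by linarith)
    simp only [mem_Iio]; linarith

lemma aux_inv_atTop : Tendsto (fun x : ℝ => 1 / (1 - x)) (𝓝[<] (1:ℝ)) atTop := by
  simp only [one_div]
  apply tendsto_inv_nhdsGT_zero.comp
  rw [tendsto_nhdsWithin_iff]
  constructor
  · have : Continuous (fun x : ℝ => 1 - x) := by continuity
    have h := this.tendsto 1
    simp only [sub_self] at h
    exact h.mono_left nhdsWithin_le_nhds
  · filter_upwards [self_mem_nhdsWithin] with x (hx : x < 1)
    simp only [mem_Ioi]; linarith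

lemma aux_ratio_const {F : ℝ → ℝ} {α K : ℝ} {L : ℝ → ℝ} (hL : SlowlyVarying L)
    (hK : 0 < K)
    (h1 : Tendsto (fun z => (1 - F z) / (L (1 / (1 - z)) * (1 - z) ^ α)) (𝓝[<] (1:ℝ)) (𝓝 K))
    {c : ℝ} (hc : 0 < c) :
    Tendsto (fun x => (1 - F (1 - c * (1 - x))) / (1 - F x)) (𝓝[<] (1:ℝ)) (𝓝 (c ^ α)) := by
  have hmap := aux_map_lt c hc
  have hne := aux_ne hK h1
  have hLr : Tendsto (fun x => L ((1/c) * (1 / (1 - x))) / L (1 / (1 - x))) (𝓝[<] (1:ℝ)) (𝓝 1) :=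
    (hL (1/c) (by positivity)).comp aux_inv_atTop
  have h1c := h1.comp hmap
  have hinv := h1.inv₀ hK.ne'
  have hprod := h1c.mul ((hLr.mul (tendsto_const_nhds (x := c ^ (α:ℝ)))).mul hinv)
  have hconst : K * ((1 * c ^ (α:ℝ)) * K⁻¹) = c ^ (α:ℝ) := by
    field_simp
  rw [hconst] at hprod
  apply hprod.congr'
  filter_upwards [hne, hmap.eventually hne, self_mem_nhdsWithin] with x hx hxc (hx1 : x < 1)
  obtain ⟨hgx, hfx⟩ := hx
  obtain ⟨hgc, hfc⟩ := hxc
  have hs : (0:ℝ) < 1 - x := by linarith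
  have e1 : 1 - (1 - c * (1 - x)) = c * (1 - x) := by ring
  have e2 : 1 / (c * (1 - x)) = (1/c) * (1 / (1 - x)) := by
    rw [one_div, mul_inv, one_div, one_div]
  have e3 : (c * (1 - x)) ^ (α:ℝ) = c ^ (α:ℝ) * (1 - x) ^ (α:ℝ) :=
    Real.mul_rpow hc.le hs.le
  simp only [Function.comp] at *
  rw [e1, e2, e3] at hgc ⊢
  have hLx : L (1 / (1 - x)) ≠ 0 := fun h => hgx (by rw [h, zero_mul])
  have hsα : (1 - x) ^ (α:ℝ) ≠ 0 := (Real.rpow_pos_of_pos hs α).ne'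
  have hLc : L ((1/c) * (1 / (1 - x))) ≠ 0 := by
    intro h; rw [h, zero_mul] at hgc; exact hgc rfl
  have hcα : c ^ (α:ℝ) ≠ 0 := (Real.rpow_pos_of_pos hc α).ne'
  have key : ∀ a p q r t f : ℝ, p ≠ 0 → q ≠ 0 → r ≠ 0 → t ≠ 0 → f ≠ 0 →
      a / f = a / (p * (q * r)) * (p / t * q * (f / (t * r))⁻¹) := by
    intro a p q r t f hp hq hr ht hf
    field_simp
  exact (key _ _ _ _ _ _ hLc hcα hsα hLx hfx).symm

lemma aux_sub_Ioi : Tendsto (fun x : ℝ => 1 - x) (𝓝[<] (1:ℝ)) (𝓝[>] (0:ℝ)) := by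
  rw [tendsto_nhdsWithin_iff]
  constructor
  · have : Continuous (fun x : ℝ => 1 - x) := by continuity
    have h := this.tendsto 1
    simp only [sub_self] at h
    exact h.mono_left nhdsWithin_le_nhds
  · filter_upwards [self_mem_nhdsWithin] with x (hx : x < 1)
    simp only [mem_Ioi]; linarith

lemma aux_w (l : ℝ) :
    Tendsto (fun x => (1 - x * Real.exp (-(l * (1 - x)))) / (1 - x)) (𝓝[<] (1:ℝ))
      (𝓝 (1 + l)) := by
  have hderiv : HasDerivAt (fun h : ℝ => Real.exp (-(l * h))) (-l) 0 := by
    have h1 : HasDerivAt (fun h : ℝ => -(l * h)) (-l) 0 := by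
      simpa using (hasDerivAt_id (0:ℝ)).const_mul (-l)
    simpa using h1.exp
  have hslope : Tendsto (fun h : ℝ => (1 - Real.exp (-(l * h))) / h) (𝓝[>] (0:ℝ)) (𝓝 l) := by
    have h2 := hasDerivAt_iff_tendsto_slope.1 hderiv
    have h3 : Tendsto (slope (fun h : ℝ => Real.exp (-(l * h))) 0) (𝓝[>] (0:ℝ)) (𝓝 (-l)) :=
      h2.mono_left (nhdsWithin_mono _ (fun y hy => ne_of_gt hy))
    have h4 := h3.neg
    rw [neg_neg] at h4
    apply h4.congr
    intro h
    simp [slope_def_field, div_eq_inv_mul]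
    ring
  have hE : Tendsto (fun h : ℝ => Real.exp (-(l * h))) (𝓝[>] (0:ℝ)) (𝓝 1) := by
    have : Continuous (fun h : ℝ => Real.exp (-(l * h))) := by continuity
    have h := this.tendsto 0
    simp only [mul_zero, neg_zero, Real.exp_zero] at h
    exact h.mono_left nhdsWithin_le_nhds
  have hsum := (hslope.add hE).comp aux_sub_Ioi
  have hthis : Tendsto (fun x : ℝ => (1 - Real.exp (-(l * (1 - x)))) / (1 - x)
      + Real.exp (-(l * (1 - x)))) (𝓝[<] (1:ℝ)) (𝓝 (l + 1)) := hsum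
  have heq : (1:ℝ) + l = l + 1 := by ring
  rw [heq]
  apply hthis.congr'
  filter_upwards [self_mem_nhdsWithin] with x (hx : x < 1)
  have hs : (1:ℝ) - x ≠ 0 := by intro h; linarith [h]
  field_simp
  ring

lemma aux_Q {u : ℕ → ℝ} (hu0 : u 0 = 0) (hupos : ∀ n, 0 ≤ u n) (husum : HasSum u 1)
    {α K : ℝ} (hK : 0 < K) {L : ℝ → ℝ} (hL : SlowlyVarying L)
    (h1 : Tendsto (fun z => (1 - pgf u z) / (L (1 / (1 - z)) * (1 - z) ^ α))
      (𝓝[<] (1:ℝ)) (𝓝 K))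
    {l : ℝ} (hl : 0 < l) :
    Tendsto (fun x => (1 - pgf u (x * Real.exp (-(l * (1 - x))))) / (1 - pgf u x))
      (𝓝[<] (1:ℝ)) (𝓝 ((1 + l) ^ (α:ℝ))) := by
  rw [Metric.tendsto_nhds]
  intro ε hε
  have hcont : ContinuousAt (fun t : ℝ => t ^ (α:ℝ)) (1 + l) :=
    Real.continuousAt_rpow_const _ _ (Or.inl (by positivity))
  rw [Metric.continuousAt_iff] at hcont
  obtain ⟨δ, hδ0, hδ⟩ := hcont (ε/2) (by linarith)
  set δ' := min (δ/2) (1/2) with hδ'def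
  have hδ'0 : 0 < δ' := lt_min (by linarith) (by norm_num)
  have hδ'δ : δ' < δ := lt_of_le_of_lt (min_le_left _ _) (by linarith)
  have hδ'1 : δ' ≤ 1/2 := min_le_right _ _
  set c1 := 1 + l - δ' with hc1def
  set c2 := 1 + l + δ' with hc2def
  have hc10 : 0 < c1 := by simp only [hc1def]; linarith
  have hc20 : 0 < c2 := by simp only [hc2def]; linarith
  have hd1 : |c1 ^ (α:ℝ) - (1 + l) ^ (α:ℝ)| < ε/2 := by
    have := hδ (x := c1) (by rw [Real.dist_eq]; simp only [hc1def]; rw [abs_of_nonpos] <;> [skip; linarith]; simp; linarith)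
    rwa [Real.dist_eq] at this
  have hd2 : |c2 ^ (α:ℝ) - (1 + l) ^ (α:ℝ)| < ε/2 := by
    have := hδ (x := c2) (by rw [Real.dist_eq]; simp only [hc2def]; rw [abs_of_nonneg] <;> [skip; linarith]; simp; linarith)
    rwa [Real.dist_eq] at this
  have hQ1 := aux_ratio_const hL hK h1 hc10
  have hQ2 := aux_ratio_const hL hK h1 hc20
  have hev1 : ∀ᶠ x in 𝓝[<] (1:ℝ),
      (1 + l) ^ (α:ℝ) - ε < (1 - pgf u (1 - c1 * (1 - x))) / (1 - pgf u x) :=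
    hQ1.eventually (eventually_gt_nhds (by cases abs_lt.1 hd1; linarith))
  have hev2 : ∀ᶠ x in 𝓝[<] (1:ℝ),
      (1 - pgf u (1 - c2 * (1 - x))) / (1 - pgf u x) < (1 + l) ^ (α:ℝ) + ε :=
    hQ2.eventually (eventually_lt_nhds (by cases abs_lt.1 hd2; linarith))
  have hwv : ∀ᶠ x in 𝓝[<] (1:ℝ),
      (1 - x * Real.exp (-(l * (1 - x)))) / (1 - x) ∈ Ioo c1 c2 :=
    (aux_w l).eventually (Ioo_mem_nhds (by simp only [hc1def]; linarith)
      (by simp only [hc2def]; linarith))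
  have hx2 : ∀ᶠ x in 𝓝[<] (1:ℝ), 1 - 1/c2 < x :=
    eventually_nhdsWithin_of_eventually_nhds
      (eventually_gt_nhds (by linarith [one_div_pos.2 hc20]))
  filter_upwards [hev1, hev2, hwv, hx2,
    Ioo_mem_nhdsLT_of_mem (by norm_num : (1:ℝ) ∈ Ioc (0:ℝ) 1)] with x h1x h2x h3x h4x h5x
  have hs : (0:ℝ) < 1 - x := by linarith [h5x.2]
  set w := x * Real.exp (-(l * (1 - x))) with hwdef
  have hw1 : c1 * (1 - x) < 1 - w := (lt_div_iff₀ hs).1 h3x.1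
  have hw2 : 1 - w < c2 * (1 - x) := (div_lt_iff₀ hs).1 h3x.2
  have hwlt : w ≤ 1 - c1 * (1 - x) := by linarith
  have hwgt : 1 - c2 * (1 - x) ≤ w := by linarith
  have h0c2 : 0 ≤ 1 - c2 * (1 - x) := by
    have h1x' : 1 - x < 1/c2 := by linarith
    have := mul_lt_mul_of_pos_left h1x' hc20
    rw [mul_one_div, div_self hc20.ne'] at this
    linarith
  have hw0 : 0 ≤ w := mul_nonneg h5x.1.le (Real.exp_pos _).le
  have hc1s : 0 < c1 * (1 - x) := mul_pos hc10 hs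
  have hwle1 : w ≤ 1 := by linarith
  have harg1 : 1 - c1 * (1 - x) ≤ 1 := by linarith
  have hRx : 0 < 1 - pgf u x := by
    have := aux_pgf_le hu0 hupos husum h5x.1.le h5x.2.le
    linarith
  have hm1 : pgf u w ≤ pgf u (1 - c1 * (1 - x)) :=
    aux_pgf_mono hupos husum hw0 hwlt harg1
  have hm2 : pgf u (1 - c2 * (1 - x)) ≤ pgf u w :=
    aux_pgf_mono hupos husum h0c2 hwgt hwle1
  have hlow : (1 - pgf u (1 - c1 * (1 - x))) / (1 - pgf u x)
      ≤ (1 - pgf u w) / (1 - pgf u x) := by gcongr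
  have hhigh : (1 - pgf u w) / (1 - pgf u x)
      ≤ (1 - pgf u (1 - c2 * (1 - x))) / (1 - pgf u x) := by gcongr
  rw [Real.dist_eq, abs_sub_lt_iff]
  constructor <;> linarith

lemma aux_rho {uf df : ℝ → ℝ} {α b : ℝ} (hb : b ∈ Set.Ioo (-1:ℝ) 1) {L : ℝ → ℝ}
    (hasymu : Tendsto (fun z => (1 - uf z) / (L (1 / (1 - z)) * (1 - z) ^ α))
        (𝓝[<] (1:ℝ)) (𝓝 ((1 + b) / 2)))
    (hasymd : Tendsto (fun z => (1 - df z) / (L (1 / (1 - z)) * (1 - z) ^ α))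
        (𝓝[<] (1:ℝ)) (𝓝 ((1 - b) / 2))) :
    Tendsto (fun x => (1 - df x) / (1 - uf x)) (𝓝[<] (1:ℝ)) (𝓝 ((1 - b) / (1 + b))) := by
  have hKu : (0:ℝ) < (1 + b) / 2 := by cases hb; linarith
  have hb1 : (1:ℝ) + b ≠ 0 := by cases hb; intro h; linarith [h]
  have hdiv := hasymd.div hasymu hKu.ne'
  have hconst : ((1 - b) / 2) / ((1 + b) / 2) = (1 - b) / (1 + b) := by
    field_simp
  rw [hconst] at hdiv
  apply hdiv.congr'
  filter_upwards [aux_ne hKu hasymu] with x hx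
  obtain ⟨hg, hf⟩ := hx
  simp only [Pi.div_apply]
  rw [div_div_div_eq, mul_comm (1 - df x) (L (1 / (1 - x)) * (1 - x) ^ α)]
  exact mul_div_mul_left _ _ hg

end Aux

/-- If `1 - F_u(z) ~ ((1+b)/2) L(1/(1-z)) (1-z)^α` and
`1 - F_d(z) ~ ((1-b)/2) L(1/(1-z)) (1-z)^α` as `z ↑ 1`, with `L` slowly varying,
`α ∈ (0,1)` and `b ∈ (-1,1)`, then for every `λ > 0`,
`lim_{x ↑ 1} (1-x) P(x, e^{-λ(1-x)}) = ((1+λ)^{α-1} + ρ)/((1+λ)^α + ρ)` with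
`ρ = (1-b)/(1+b)`. -/
theorem stmt16 (u d : ℕ → ℝ)
    (hu0 : u 0 = 0) (hd0 : d 0 = 0)
    (hupos : ∀ n, 0 ≤ u n) (hdpos : ∀ n, 0 ≤ d n)
    (husum : HasSum u 1) (hdsum : HasSum d 1)
    (α b : ℝ) (hα : α ∈ Set.Ioo (0:ℝ) 1) (hb : b ∈ Set.Ioo (-1:ℝ) 1)
    (L : ℝ → ℝ) (hL : SlowlyVarying L)
    (hasymu : Tendsto (fun z => (1 - pgf u z) / (L (1 / (1 - z)) * (1 - z) ^ α))
        (𝓝[<] 1) (nhds ((1 + b) / 2)))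
    (hasymd : Tendsto (fun z => (1 - pgf d z) / (L (1 / (1 - z)) * (1 - z) ^ α))
        (𝓝[<] 1) (nhds ((1 - b) / 2))) :
    ∀ l > (0:ℝ),
      Tendsto (fun x => (1 - x) * Pxy u d x (Real.exp (-(l * (1 - x)))))
        (𝓝[<] 1)
        (nhds (((1 + l) ^ (α - 1) + (1 - b) / (1 + b))
                / ((1 + l) ^ α + (1 - b) / (1 + b)))) := by
  intro l hl
  obtain ⟨hα0, hα1⟩ := hα
  obtain ⟨hbl, hbr⟩ := hb
  have hb1' : (0:ℝ) < 1 + b := by linarith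
  have hb2' : (0:ℝ) < 1 - b := by linarith
  have hKu : (0:ℝ) < (1 + b) / 2 := by linarith
  have hρ : (0:ℝ) < (1 - b) / (1 + b) := div_pos hb2' hb1'
  have hQ := aux_Q hu0 hupos husum hKu hL hasymu hl
  have hρx := aux_rho ⟨hbl, hbr⟩ hasymu hasymd
  have hFd1 : Tendsto (pgf d) (𝓝[<] (1:ℝ)) (𝓝 1) := aux_pgf_tendsto_one hdpos hdsum
  have hE1 : Tendsto (fun x : ℝ => Real.exp (-(l * (1 - x)))) (𝓝[<] (1:ℝ)) (𝓝 1) := by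
    have hc : Continuous (fun x : ℝ => Real.exp (-(l * (1 - x)))) := by continuity
    have h := hc.tendsto 1
    simp only [sub_self, mul_zero, neg_zero, Real.exp_zero] at h
    exact h.mono_left nhdsWithin_le_nhds
  have hss : Tendsto (fun x : ℝ => (1 - x) / (1 - x * Real.exp (-(l * (1 - x)))))
      (𝓝[<] (1:ℝ)) (𝓝 (1 + l)⁻¹) := by
    have h := (aux_w l).inv₀ (by positivity : (1:ℝ) + l ≠ 0)
    simp only [inv_div] at h
    exact h
  have hpow : (0:ℝ) < (1 + l) ^ (α:ℝ) := Real.rpow_pos_of_pos (by linarith) _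
  have hden_ne : (1 - b) / (1 + b) + 1 * (1 + l) ^ (α:ℝ) ≠ 0 :=
    ne_of_gt (by rw [one_mul]; exact add_pos hρ hpow)
  have hnum := (((hFd1.mul hE1).mul hss).mul hQ).add hρx
  have hden := hρx.add (hFd1.mul hQ)
  have hG := hnum.div hden hden_ne
  have hc : (1 * 1 * (1 + l)⁻¹ * (1 + l) ^ (α:ℝ) + (1 - b) / (1 + b))
      / ((1 - b) / (1 + b) + 1 * (1 + l) ^ (α:ℝ))
      = ((1 + l) ^ (α - 1) + (1 - b) / (1 + b)) / ((1 + l) ^ (α:ℝ) + (1 - b) / (1 + b)) := by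
    rw [Real.rpow_sub (by linarith : (0:ℝ) < 1 + l), Real.rpow_one]
    ring
  rw [hc] at hG
  apply hG.congr'
  filter_upwards [Ioo_mem_nhdsLT_of_mem (by norm_num : (1:ℝ) ∈ Ioc (0:ℝ) 1)] with x hx
  obtain ⟨hx0, hx1⟩ := hx
  have hE0 : 0 < Real.exp (-(l * (1 - x))) := Real.exp_pos _
  have hElt : Real.exp (-(l * (1 - x))) < 1 := by
    rw [Real.exp_lt_one_iff]
    have : 0 < l * (1 - x) := mul_pos hl (by linarith)
    linarith
  have hw0 : 0 < x * Real.exp (-(l * (1 - x))) := mul_pos hx0 hE0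
  have hw1 : x * Real.exp (-(l * (1 - x))) < 1 := by nlinarith
  have hFu_le : pgf u (x * Real.exp (-(l * (1 - x)))) ≤ x * Real.exp (-(l * (1 - x))) :=
    aux_pgf_le hu0 hupos husum hw0.le hw1.le
  have hFux_le : pgf u x ≤ x := aux_pgf_le hu0 hupos husum hx0.le hx1.le
  have hFd_le : pgf d x ≤ x := aux_pgf_le hd0 hdpos hdsum hx0.le hx1.le
  have hFu0 : 0 ≤ pgf u (x * Real.exp (-(l * (1 - x)))) := aux_pgf_nonneg hupos hw0.le
  have hFd0 : 0 ≤ pgf d x := aux_pgf_nonneg hdpos hx0.le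
  have h1x : (1:ℝ) - x ≠ 0 := by intro h; linarith [h]
  have h1w : 1 - x * Real.exp (-(l * (1 - x))) ≠ 0 := by intro h; linarith [h]
  have hRu : 1 - pgf u x ≠ 0 := by intro h; linarith [h]
  have hDpos : 0 < 1 - pgf d x * pgf u (x * Real.exp (-(l * (1 - x)))) := by nlinarith
  have hD : 1 - pgf d x * pgf u (x * Real.exp (-(l * (1 - x)))) ≠ 0 := hDpos.ne'
  have hsum_ne : (1 - pgf d x) + pgf d x * (1 - pgf u (x * Real.exp (-(l * (1 - x))))) ≠ 0 := by
    have he : (1 - pgf d x) + pgf d x * (1 - pgf u (x * Real.exp (-(l * (1 - x)))))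
        = 1 - pgf d x * pgf u (x * Real.exp (-(l * (1 - x)))) := by ring
    rw [he]; exact hD
  simp only [Pxy, tgf, Pi.div_apply]
  field_simp
  ring
end

section
/- Let τ^u, τ^d be independent positive random variables, m ∈ (-1,1), and set τ^c = (1-m)τ^u - (1+m)τ^d. Suppose the tails 𝒯_u(t) = P(τ^u > t) and 𝒯_d(t) = P(τ^d > t) satisfy: 𝒯(t) := 𝒯_u(t) + 𝒯_d(t) is regularly varying of index -α for some α ∈ (0,2), α ≠ 2, and (𝒯_u(t) - 𝒯_d(t))/𝒯(t) → b ∈ [-1,1]. Then P(|τ^c| > t) ~ [ (1-m)^α (1+b)/2 + (1+m)^α (1-b)/2 ] · 𝒯(t) as t → ∞, and the tail balance of τ^c equals β = ((1-m)^α(1+b) - (1+m)^α(1-b)) / ((1-m)^α(1+b) + (1+m)^α(1-b)). -/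
/-!
Write `τᶜ = cσ - dρ` with `σ = τᵘ`, `ρ = τᵈ`, `c = 1 - m`, `d = 1 + m`. Since `ρ > 0`,
`{τᶜ > t} ⊆ {σ > t/c}`; conversely, by independence,
`P(τᶜ > t) ≥ P(σ > (1+ε)t/c) · P(dρ ≤ εt)`, and the second factor tends to `1`.
Regular variation of `𝒯` turns `P(σ > kt)/𝒯(t)` into `k^{-α} (1+b)/2`, so letting `ε → 0`
gives `P(τᶜ > t)/𝒯(t) → c^α (1+b)/2`. Exchanging the roles of `τᵘ` and `τᵈ` gives the left
tail `d^α (1-b)/2`; the two-sided tail is the sum and the balance is the normalized difference.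
-/

open MeasureTheory Filter Set ProbabilityTheory
open scoped ENNReal ProbabilityTheory

open Topology

def IsRegularlyVarying (T : ℝ → ℝ) (ρ : ℝ) : Prop :=
  ∀ k > (0:ℝ), Tendsto (fun t => T (k * t) / T t) atTop (𝓝 (k ^ ρ))

section RegularVariation

variable {L T U : ℝ → ℝ} {ρ : ℝ}

theorem SlowlyVarying.eventually_ne_zero (hL : SlowlyVarying L) : ∀ᶠ t in atTop, L t ≠ 0 :=
  ((hL 1 one_pos).eventually_ne one_ne_zero).mono fun t ht h0 => ht (by simp [h0])

theorem SlowlyVarying.isRegularlyVarying (hL : SlowlyVarying L)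
    (hT : ∀ᶠ t in atTop, T t = L t * t ^ ρ) : IsRegularlyVarying T ρ := by
  intro k hk
  have hkt : Tendsto (k * ·) atTop atTop := tendsto_id.const_mul_atTop hk
  have hlim := (hL k hk).mul_const (k ^ ρ)
  rw [one_mul] at hlim
  refine hlim.congr' ?_
  filter_upwards [hT, hkt.eventually hT, hL.eventually_ne_zero, eventually_gt_atTop 0]
    with t hTt hTkt hLt ht
  rw [hTt, hTkt, Real.mul_rpow hk.le ht.le]
  field_simp [(Real.rpow_pos_of_pos ht ρ).ne']

theorem IsRegularlyVarying.tendsto_comp_const_mul_div (hT : IsRegularlyVarying T ρ)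
    (hT0 : ∀ᶠ t in atTop, T t ≠ 0) {p : ℝ} (hU : Tendsto (fun t => U t / T t) atTop (𝓝 p))
    {k : ℝ} (hk : 0 < k) : Tendsto (fun t => U (k * t) / T t) atTop (𝓝 (p * k ^ ρ)) := by
  have hkt : Tendsto (k * ·) atTop atTop := tendsto_id.const_mul_atTop hk
  refine ((hU.comp hkt).mul (hT k hk)).congr' ?_
  filter_upwards [hkt.eventually hT0] with t ht
  exact div_mul_div_cancel₀ ht

end RegularVariation

section Tails

variable {Ω : Type*} [MeasurableSpace Ω] {μ : Measure Ω}

theorem tendsto_toReal_measure_setOf_lt_atTop [IsFiniteMeasure μ] {X : Ω → ℝ}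
    (hX : Measurable X) :
    Tendsto (fun t : ℝ => (μ {ω | t < X ω}).toReal) atTop (𝓝 0) := by
  have hanti : Antitone fun t : ℝ => {ω | t < X ω} := fun s t hst ω hω => hst.trans_lt hω
  have hempty : ⋂ t : ℝ, {ω | t < X ω} = ∅ :=
    eq_empty_of_forall_notMem fun ω hω => lt_irrefl (X ω) (mem_iInter.1 hω (X ω))
  have h := tendsto_measure_iInter_atTop (μ := μ) (s := fun t : ℝ => {ω | t < X ω})
    (fun t => (hX measurableSet_Ioi).nullMeasurableSet) hanti ⟨0, measure_ne_top _ _⟩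
  rw [hempty, measure_empty] at h
  exact (ENNReal.tendsto_toReal ENNReal.zero_ne_top).comp h

theorem measure_setOf_lt_abs_eq_add {X : Ω → ℝ} (hX : Measurable X) {t : ℝ} (ht : 0 ≤ t) :
    μ {ω | t < |X ω|} = μ {ω | t < X ω} + μ {ω | X ω < -t} := by
  have hset : {ω | t < |X ω|} = {ω | t < X ω} ∪ {ω | X ω < -t} := by
    ext ω
    simp only [mem_ofPred_eq, mem_union, lt_abs, lt_neg]
  rw [hset, measure_union _ (measurableSet_lt hX measurable_const)]
  exact disjoint_left.2 fun ω h₁ h₂ => by simp only [mem_ofPred_eq] at h₁ h₂; linarith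

variable {σ ρ : Ω → ℝ} {c d : ℝ}

theorem measure_setOf_lt_mul_sub_mul_le (hρ : ∀ᵐ ω ∂μ, 0 ≤ ρ ω) (hc : 0 < c) (hd : 0 ≤ d)
    (t : ℝ) :
    μ {ω | t < c * σ ω - d * ρ ω} ≤ μ {ω | c⁻¹ * t < σ ω} := by
  refine measure_mono_ae ?_
  filter_upwards [hρ] with ω hρω hω
  have hω' : t < c * σ ω - d * ρ ω := hω
  show c⁻¹ * t < σ ω
  rw [inv_mul_lt_iff₀ hc]
  linarith [mul_nonneg hd hρω]

theorem ProbabilityTheory.IndepFun.measure_mul_le_measure_lt_mul_sub_mul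
    (hind : IndepFun σ ρ μ) (hc : 0 < c) (hd : 0 ≤ d) {t a e : ℝ} (hae : t ≤ c * a - d * e) :
    μ {ω | a < σ ω} * μ {ω | ρ ω ≤ e} ≤ μ {ω | t < c * σ ω - d * ρ ω} := by
  calc μ {ω | a < σ ω} * μ {ω | ρ ω ≤ e} = μ (σ ⁻¹' Ioi a ∩ ρ ⁻¹' Iic e) :=
        (hind.measure_inter_preimage_eq_mul _ _ measurableSet_Ioi measurableSet_Iic).symm
    _ ≤ _ := measure_mono fun ω ⟨hσ, hρ⟩ => ?_
  have hσ' : a < σ ω := hσ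
  have hρ' : ρ ω ≤ e := hρ
  show t < c * σ ω - d * ρ ω
  linarith [mul_lt_mul_of_pos_left hσ' hc, mul_le_mul_of_nonneg_left hρ' hd]

end Tails

section OneSidedTail

variable {Ω : Type*} [MeasurableSpace Ω] {μ : Measure Ω} [IsProbabilityMeasure μ]
  {σ ρ : Ω → ℝ} {c d α p : ℝ} {T : ℝ → ℝ}

theorem toReal_measure_setOf_le_eq_one_sub (hρ : Measurable ρ) (e : ℝ) :
    (μ {ω | ρ ω ≤ e}).toReal = 1 - (μ {ω | e < ρ ω}).toReal := by
  have hcompl : {ω | ρ ω ≤ e} = {ω | e < ρ ω}ᶜ := by ext ω; simp [not_lt]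
  rw [hcompl, ← measureReal_def,
    probReal_compl_eq_one_sub (measurableSet_lt measurable_const hρ), measureReal_def]

theorem tendsto_toReal_measure_setOf_lt_mul_sub_mul_div (hρ : Measurable ρ)
    (hind : IndepFun σ ρ μ) (hρ0 : ∀ᵐ ω ∂μ, 0 ≤ ρ ω) (hc : 0 < c) (hd : 0 < d)
    (hT : IsRegularlyVarying T (-α))
    (hT0 : ∀ᶠ t in atTop, 0 < T t)
    (hσT : Tendsto (fun t => (μ {ω | t < σ ω}).toReal / T t) atTop (𝓝 p)) :
    Tendsto (fun t => (μ {ω | t < c * σ ω - d * ρ ω}).toReal / T t) atTop (𝓝 (p * c ^ α)) := by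
  have hT0' : ∀ᶠ t in atTop, T t ≠ 0 := hT0.mono fun _ h => h.ne'
  have hupper : Tendsto (fun t => (μ {ω | c⁻¹ * t < σ ω}).toReal / T t) atTop
      (𝓝 (p * c ^ α)) := by
    simpa [Real.inv_rpow hc.le, Real.rpow_neg hc.le] using
      hT.tendsto_comp_const_mul_div hT0' hσT (inv_pos.2 hc)
  have hlower : ∀ ε > 0, Tendsto (fun t => (μ {ω | (1 + ε) * c⁻¹ * t < σ ω}).toReal / T t *
      (1 - (μ {ω | ε * d⁻¹ * t < ρ ω}).toReal)) atTop (𝓝 (p * c ^ α * (1 + ε) ^ (-α))) := by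
    intro ε hε
    have hσ := hT.tendsto_comp_const_mul_div hT0' hσT (k := (1 + ε) * c⁻¹) (by positivity)
    have hR := ((tendsto_toReal_measure_setOf_lt_atTop (μ := μ) hρ).comp
      (tendsto_id.const_mul_atTop (by positivity : 0 < ε * d⁻¹))).const_sub 1
    have hval : p * ((1 + ε) * c⁻¹) ^ (-α) * (1 - 0) = p * c ^ α * (1 + ε) ^ (-α) := by
      rw [Real.mul_rpow (by positivity) (by positivity), Real.inv_rpow hc.le, Real.rpow_neg hc.le,
        inv_inv]
      ring
    rw [← hval]
    exact hσ.mul hR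
  have hlim : Tendsto (fun ε => p * c ^ α * (1 + ε) ^ (-α)) (𝓝[>] 0) (𝓝 (p * c ^ α)) := by
    have : ContinuousAt (fun ε : ℝ => p * c ^ α * (1 + ε) ^ (-α)) 0 := by
      fun_prop (disch := norm_num)
    simpa using this.tendsto.mono_left nhdsWithin_le_nhds
  refine tendsto_order.2 ⟨fun q hq => ?_, fun q hq => ?_⟩
  · obtain ⟨ε, hεq, hε⟩ := ((hlim.eventually (lt_mem_nhds hq)).and self_mem_nhdsWithin).exists
    filter_upwards [(hlower ε hε).eventually (lt_mem_nhds hεq), hT0] with t ht hTt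
    refine ht.trans_le ?_
    rw [div_mul_eq_mul_div, ← toReal_measure_setOf_le_eq_one_sub hρ, ← ENNReal.toReal_mul]
    refine div_le_div_of_nonneg_right (ENNReal.toReal_mono (measure_ne_top _ _)
      (hind.measure_mul_le_measure_lt_mul_sub_mul hc hd.le (le_of_eq ?_))) hTt.le
    field_simp
    ring
  · filter_upwards [hupper.eventually (gt_mem_nhds hq), hT0] with t ht hTt
    refine lt_of_le_of_lt ?_ ht
    exact div_le_div_of_nonneg_right (ENNReal.toReal_mono (measure_ne_top _ _)
      (measure_setOf_lt_mul_sub_mul_le hρ0 hc hd.le t)) hTt.le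

end OneSidedTail

theorem tendsto_div_add_of_tendsto_sub_div_add {ι : Type*} {l : Filter ι} {x y : ι → ℝ} {b : ℝ}
    (h : Tendsto (fun i => (x i - y i) / (x i + y i)) l (𝓝 b))
    (h0 : ∀ᶠ i in l, x i + y i ≠ 0) :
    Tendsto (fun i => x i / (x i + y i)) l (𝓝 ((1 + b) / 2)) ∧
      Tendsto (fun i => y i / (x i + y i)) l (𝓝 ((1 - b) / 2)) := by
  constructor
  · refine ((tendsto_const_nhds.add h).div_const 2).congr' ?_
    filter_upwards [h0] with i hi
    field_simp
    ring
  · refine ((tendsto_const_nhds.sub h).div_const 2).congr' ?_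
    filter_upwards [h0] with i hi
    field_simp
    ring

theorem tendsto_toReal_measure_setOf_lt_abs_div_and_balance {Ω : Type*} [MeasurableSpace Ω]
    {μ : Measure Ω} [IsFiniteMeasure μ] {X : Ω → ℝ} (hX : Measurable X) {T : ℝ → ℝ} {A B : ℝ}
    (hAB : A + B ≠ 0) (hT0 : ∀ᶠ t in atTop, T t ≠ 0)
    (hA : Tendsto (fun t => (μ {ω | t < X ω}).toReal / T t) atTop (𝓝 A))
    (hB : Tendsto (fun t => (μ {ω | t < -X ω}).toReal / T t) atTop (𝓝 B)) :
    Tendsto (fun t => (μ {ω | t < |X ω|}).toReal / T t) atTop (𝓝 (A + B)) ∧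
      Tendsto (fun t => ((μ {ω | t < X ω}).toReal - (μ {ω | X ω < -t}).toReal) /
        ((μ {ω | t < X ω}).toReal + (μ {ω | X ω < -t}).toReal)) atTop (𝓝 ((A - B) / (A + B))) := by
  have hset : ∀ t, {ω | t < -X ω} = {ω | X ω < -t} := fun t =>
    Set.ext fun ω => show t < -X ω ↔ X ω < -t from lt_neg
  simp only [hset] at hB
  constructor
  · refine (hA.add hB).congr' ?_
    filter_upwards [eventually_ge_atTop 0] with t ht
    rw [measure_setOf_lt_abs_eq_add hX ht,
      ENNReal.toReal_add (measure_ne_top _ _) (measure_ne_top _ _), add_div]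
  · refine ((hA.sub hB).div (hA.add hB) hAB).congr' ?_
    filter_upwards [hT0] with t ht
    rw [Pi.div_apply, ← sub_div, ← add_div, div_div_div_cancel_right₀ ht]

theorem stmt19_general {Ω : Type*} [MeasureSpace Ω] [IsProbabilityMeasure (ℙ : Measure Ω)]
    (τu τd : Ω → ℝ) (hmu : Measurable τu) (hmd : Measurable τd)
    (hind : IndepFun τu τd ℙ)
    (hposu : ∀ᵐ ω, 0 < τu ω) (hposd : ∀ᵐ ω, 0 < τd ω)
    (m : ℝ) (hm : m ∈ Set.Ioo (-1:ℝ) 1)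
    (α : ℝ)
    (b : ℝ) (hb : b ∈ Set.Icc (-1:ℝ) 1)
    (L : ℝ → ℝ) (hL : SlowlyVarying L)
    (hreg : ∀ᶠ t in atTop,
      (ℙ {ω | t < τu ω}).toReal + (ℙ {ω | t < τd ω}).toReal = L t * t ^ (-α))
    (hbal : Tendsto
        (fun t => ((ℙ {ω | t < τu ω}).toReal - (ℙ {ω | t < τd ω}).toReal)
            / ((ℙ {ω | t < τu ω}).toReal + (ℙ {ω | t < τd ω}).toReal))
        atTop (nhds b)) :
    Tendsto
        (fun t => (ℙ {ω | t < |(1 - m) * τu ω - (1 + m) * τd ω|}).toReal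
            / ((ℙ {ω | t < τu ω}).toReal + (ℙ {ω | t < τd ω}).toReal))
        atTop
        (nhds ((1 - m) ^ α * ((1 + b) / 2) + (1 + m) ^ α * ((1 - b) / 2))) ∧
    Tendsto
        (fun t => ((ℙ {ω | t < (1 - m) * τu ω - (1 + m) * τd ω}).toReal
              - (ℙ {ω | (1 - m) * τu ω - (1 + m) * τd ω < -t}).toReal)
            / ((ℙ {ω | t < (1 - m) * τu ω - (1 + m) * τd ω}).toReal
              + (ℙ {ω | (1 - m) * τu ω - (1 + m) * τd ω < -t}).toReal))
        atTop
        (nhds (((1 - m) ^ α * (1 + b) - (1 + m) ^ α * (1 - b))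
            / ((1 - m) ^ α * (1 + b) + (1 + m) ^ α * (1 - b)))) := by
  have h1m : 0 < 1 - m := by linarith [hm.2]
  have h1p : 0 < 1 + m := by linarith [hm.1]
  obtain ⟨hb₁, hb₂⟩ := hb
  have hT0 : ∀ᶠ t in atTop, 0 < (ℙ {ω | t < τu ω}).toReal + (ℙ {ω | t < τd ω}).toReal := by
    filter_upwards [hreg, hL.eventually_ne_zero, eventually_gt_atTop 0] with t hTt hLt ht
    refine lt_of_le_of_ne (by positivity) ?_
    rw [hTt]
    exact (mul_ne_zero hLt (Real.rpow_pos_of_pos ht _).ne').symm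
  obtain ⟨hu, hd⟩ := tendsto_div_add_of_tendsto_sub_div_add hbal (hT0.mono fun _ h => h.ne')
  have hT := hL.isRegularlyVarying hreg
  have hpos := tendsto_toReal_measure_setOf_lt_mul_sub_mul_div hmd hind
    (hposd.mono fun _ h => h.le) h1m h1p hT hT0 hu
  have hneg := tendsto_toReal_measure_setOf_lt_mul_sub_mul_div hmu hind.symm
    (hposu.mono fun _ h => h.le) h1p h1m hT hT0 hd
  have hu₀ : 0 < (1 - m) ^ α := Real.rpow_pos_of_pos h1m α
  have hd₀ : 0 < (1 + m) ^ α := Real.rpow_pos_of_pos h1p α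
  have hAB : 0 < (1 + b) / 2 * (1 - m) ^ α + (1 - b) / 2 * (1 + m) ^ α := by
    rcases le_total b 0 with h | h <;> nlinarith
  obtain ⟨habs, hbalc⟩ := tendsto_toReal_measure_setOf_lt_abs_div_and_balance
    (X := fun ω => (1 - m) * τu ω - (1 + m) * τd ω) (by fun_prop) hAB.ne'
    (hT0.mono fun _ h => h.ne') hpos (by simpa only [neg_sub] using hneg)
  refine ⟨by convert habs using 2; ring, ?_⟩
  convert hbalc using 2
  rw [div_eq_div_iff (ne_of_gt (by nlinarith)) hAB.ne']
  ring

/-- Let τᵘ, τᵈ be independent positive random variables whose summed tail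
`𝒯 = 𝒯_u + 𝒯_d` is regularly varying of index `-α`, `α ∈ (0,2)`, with tail balance
`(𝒯_u - 𝒯_d)/𝒯 → b ∈ [-1,1]`, and let `τᶜ = (1-m)τᵘ - (1+m)τᵈ`, `m ∈ (-1,1)`. Then
`P(|τᶜ| > t) ~ [(1-m)^α (1+b)/2 + (1+m)^α (1-b)/2] 𝒯(t)` and the tail balance of τᶜ is
`β = ((1-m)^α(1+b) - (1+m)^α(1-b))/((1-m)^α(1+b) + (1+m)^α(1-b))`. -/
theorem stmt19 {Ω : Type*} [MeasureSpace Ω] [IsProbabilityMeasure (ℙ : Measure Ω)]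
    (τu τd : Ω → ℝ) (hmu : Measurable τu) (hmd : Measurable τd)
    (hind : IndepFun τu τd ℙ)
    (hposu : ∀ᵐ ω, 0 < τu ω) (hposd : ∀ᵐ ω, 0 < τd ω)
    (m : ℝ) (hm : m ∈ Set.Ioo (-1:ℝ) 1)
    (α : ℝ) (hα : α ∈ Set.Ioo (0:ℝ) 2)
    (b : ℝ) (hb : b ∈ Set.Icc (-1:ℝ) 1)
    (L : ℝ → ℝ) (hL : SlowlyVarying L)
    (hreg : ∀ᶠ t in atTop,
      (ℙ {ω | t < τu ω}).toReal + (ℙ {ω | t < τd ω}).toReal = L t * t ^ (-α))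
    (hbal : Tendsto
        (fun t => ((ℙ {ω | t < τu ω}).toReal - (ℙ {ω | t < τd ω}).toReal)
            / ((ℙ {ω | t < τu ω}).toReal + (ℙ {ω | t < τd ω}).toReal))
        atTop (nhds b)) :
    Tendsto
        (fun t => (ℙ {ω | t < |(1 - m) * τu ω - (1 + m) * τd ω|}).toReal
            / ((ℙ {ω | t < τu ω}).toReal + (ℙ {ω | t < τd ω}).toReal))
        atTop
        (nhds ((1 - m) ^ α * ((1 + b) / 2) + (1 + m) ^ α * ((1 - b) / 2))) ∧
    Tendsto
        (fun t => ((ℙ {ω | t < (1 - m) * τu ω - (1 + m) * τd ω}).toReal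
              - (ℙ {ω | (1 - m) * τu ω - (1 + m) * τd ω < -t}).toReal)
            / ((ℙ {ω | t < (1 - m) * τu ω - (1 + m) * τd ω}).toReal
              + (ℙ {ω | (1 - m) * τu ω - (1 + m) * τd ω < -t}).toReal))
        atTop
        (nhds (((1 - m) ^ α * (1 + b) - (1 + m) ^ α * (1 - b))
            / ((1 - m) ^ α * (1 + b) + (1 + m) ^ α * (1 - b)))) :=
  stmt19_general τu τd hmu hmd hind hposu hposd m hm α b hb L hL hreg hbal
end
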